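/- arXiv:2302.07112 — 2 statements merged into one kernel-verified Lean document; each statement's English description precedes it below -/
import Mathlib

section
/- Let G be a lattice in ℝⁿ and D a bounded measurable set with |D ∩ (D + g)| = 0 for all nonzero g ∈ G, and suppose |D| = d(G) (the covolume of G). Then D is a fundamental domain for G, i.e., ⋃_{g∈G}(D + g) = ℝⁿ up to a set of measure zero. -/
/-! If `F` is a fundamental domain of finite measure and the translates of `D` are pairwise
essentially disjoint, then the pieces `(g +ᵥ D) ∩ F` have total measure `μ D = μ F`, so they
cover `F` up to a null set. The set of points missed by every translate of `D` is invariant, and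
it meets `F` in a null set, so it is null. Here `F` is the half-open parallelepiped spanned by
`b`, whose volume is `|det b|`. -/

open MeasureTheory

def IsEuclideanLattice {n : ℕ} (G : AddSubgroup (EuclideanSpace ℝ (Fin n))) : Prop :=
  DiscreteTopology G ∧ Submodule.span ℝ (G : Set (EuclideanSpace ℝ (Fin n))) = ⊤

open Pointwise Set Function

namespace MeasureTheory.IsFundamentalDomain

variable {G α : Type*} [Group G] [MulAction G α] [MeasurableSpace α] {μ : Measure α}
  {s t : Set α}

@[to_additive]
theorem of_pairwise_aedisjoint_of_measure_eq [Countable G] [MeasurableConstSMul G α]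
    [SMulInvariantMeasure G α μ] (ht : IsFundamentalDomain G t μ) (ht_fin : μ t ≠ ⊤)
    (hs : NullMeasurableSet s μ) (hs_disj : Pairwise (AEDisjoint μ on fun g : G => g • s))
    (hst : μ s = μ t) :
    IsFundamentalDomain G s μ where
  nullMeasurableSet := hs
  aedisjoint := hs_disj
  ae_covers := by
    set U := ⋃ g : G, g • s
    have hU : NullMeasurableSet U μ := .iUnion fun g => hs.smul g
    have h_inter : μ (t ∩ U) = μ t := by
      rw [inter_iUnion, ← hst, ht.measure_eq_tsum s, measure_iUnion₀
        (hs_disj.mono fun _ _ h => h.mono inter_subset_right inter_subset_right)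
        fun g => ht.nullMeasurableSet.inter (hs.smul g)]
      simp only [inter_comm]
    have h_diff : μ (Uᶜ ∩ t) = 0 := by
      rw [inter_comm, ← sdiff_eq, ← sdiff_self_inter,
        measure_sdiff inter_subset_left (ht.nullMeasurableSet.inter hU)
          (measure_ne_top_of_subset inter_subset_left ht_fin), h_inter, tsub_self]
    have h_inv (g : G) : g • Uᶜ = Uᶜ := by
      simp only [U, smul_set_compl, smul_set_iUnion, smul_smul]
      rw [(mul_left_surjective g).iUnion_comp fun h => h • s]
    rw [ae_iff, ← measure_zero_of_invariant ht Uᶜ h_inv h_diff]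
    simp [U, iUnion_smul_eq_ofPred_exists, compl_ofPred]

end MeasureTheory.IsFundamentalDomain

theorem Submodule.mem_span_int_range_iff {ι E : Type*} [Fintype ι] [AddCommGroup E] [Module ℝ E]
    (v : ι → E) (x : E) :
    x ∈ Submodule.span ℤ (range v) ↔ ∃ k : ι → ℤ, x = ∑ i, (k i : ℝ) • v i := by
  simp only [Submodule.mem_span_range_iff_exists_fun, Int.cast_smul_eq_zsmul, eq_comm]

theorem EuclideanSpace.volume_fundamentalDomain {ι : Type*} [Fintype ι] [DecidableEq ι]
    (b : Module.Basis ι ℝ (EuclideanSpace ℝ ι)) :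
    volume (ZSpan.fundamentalDomain b) = ENNReal.ofReal |(Matrix.of fun i j => b i j).det| := by
  set b₀ := EuclideanSpace.basisFun ι ℝ
  rw [ZSpan.measure_fundamentalDomain b volume b₀.toBasis,
    measure_congr (ZSpan.fundamentalDomain_ae_parallelepiped b₀.toBasis volume),
    OrthonormalBasis.coe_toBasis, b₀.volume_parallelepiped, mul_one, Module.Basis.det_apply,
    ← Matrix.det_transpose]
  rfl

theorem essentially_disjoint_full_measure_is_fundamental_domain_general (n : ℕ)
    (G : AddSubgroup (EuclideanSpace ℝ (Fin n)))
    (b : Module.Basis (Fin n) ℝ (EuclideanSpace ℝ (Fin n)))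
    (hbG : ∀ x, x ∈ G ↔ ∃ k : Fin n → ℤ, x = ∑ i, (k i : ℝ) • b i)
    (D : Set (EuclideanSpace ℝ (Fin n))) (hD : MeasurableSet D)
    (hdisj : ∀ g ∈ G, g ≠ 0 → volume (D ∩ {x | x - g ∈ D}) = 0)
    (hvol : volume D = ENNReal.ofReal |(Matrix.of fun i j => b i j).det|) :
    volume {x : EuclideanSpace ℝ (Fin n) | ∀ g ∈ G, x - g ∉ D} = 0 := by
  have hG : (Submodule.span ℤ (range b)).toAddSubgroup = G :=
    AddSubgroup.ext fun x => (Submodule.mem_span_int_range_iff b x).trans (hbG x).symm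
  have : Countable G := hG ▸ inferInstanceAs (Countable (Submodule.span ℤ (range b)))
  have hF : IsAddFundamentalDomain G (ZSpan.fundamentalDomain b) :=
    hG ▸ ZSpan.isAddFundamentalDomain' b volume
  have hF_vol := EuclideanSpace.volume_fundamentalDomain b
  have hD_disj (g : G) (hg : g ≠ 0) : AEDisjoint volume (g +ᵥ D) D := by
    have h_vadd : (g : EuclideanSpace ℝ (Fin n)) +ᵥ D =
        {x | x - (g : EuclideanSpace ℝ (Fin n)) ∈ D} := by
      ext x
      simp [mem_vadd_set_iff_neg_vadd_mem, sub_eq_neg_add]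
    rw [AEDisjoint, inter_comm]
    exact h_vadd ▸ hdisj g g.2 (by exact_mod_cast hg)
  have hD_fd := hF.of_pairwise_aedisjoint_of_measure_eq (hF_vol ▸ ENNReal.ofReal_ne_top)
    hD.nullMeasurableSet
    (Measure.pairwise_aedisjoint_of_aedisjoint_forall_ne_zero hD_disj
      fun g => (measurePreserving_vadd _ volume).quasiMeasurePreserving)
    (hvol.trans hF_vol.symm)
  refine measure_mono_null (fun x hx => ?_) (ae_iff.1 hD_fd.ae_covers)
  rintro ⟨g, hg⟩
  refine hx (-(g : EuclideanSpace ℝ (Fin n))) (neg_mem g.2) ?_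
  rwa [sub_neg_eq_add, add_comm]

/-- A bounded measurable set whose lattice translates are pairwise essentially disjoint
and whose measure equals the covolume is a fundamental domain: its translates cover ℝⁿ
up to measure zero. -/
theorem essentially_disjoint_full_measure_is_fundamental_domain (n : ℕ)
    (G : AddSubgroup (EuclideanSpace ℝ (Fin n))) (hG : IsEuclideanLattice G)
    (b : Module.Basis (Fin n) ℝ (EuclideanSpace ℝ (Fin n)))
    (hbG : ∀ x, x ∈ G ↔ ∃ k : Fin n → ℤ, x = ∑ i, (k i : ℝ) • b i)
    (D : Set (EuclideanSpace ℝ (Fin n))) (hD : MeasurableSet D)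
    (hbd : Bornology.IsBounded D)
    (hdisj : ∀ g ∈ G, g ≠ 0 → volume (D ∩ {x | x - g ∈ D}) = 0)
    (hvol : volume D = ENNReal.ofReal |(Matrix.of fun i j => b i j).det|) :
    volume {x : EuclideanSpace ℝ (Fin n) | ∀ g ∈ G, x - g ∉ D} = 0 :=
  essentially_disjoint_full_measure_is_fundamental_domain_general n G b hbG D hD hdisj hvol
end

section
/- Let Gₖ be a sequence of lattices in ℝⁿ converging in the Kuratowski sense to a lattice G, and let Eₖ, Fₖ be measurable sets with Eₖ → E and Fₖ → F in L¹_loc, such that |Eₖ ∩ (Fₖ + hₖ)| = 0 for all k where hₖ ∈ Gₖ with hₖ → g ∈ G. Then |E ∩ (F + g)| = 0. -/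
/-!
On a compact `K`, the set `E ∩ (F + g) ∩ K` lies in
`(Eₖ ∩ (Fₖ + hₖ)) ∪ ((Eₖ ∆ E) ∩ K) ∪ (((Fₖ + hₖ) ∆ (F + g)) ∩ K)`, so it is null once
`Fₖ + hₖ → F + g` in `L¹_loc`, and σ-compactness makes `E ∩ (F + g)` null. The translates
converge because, for a fixed compact `K'` containing `K - hₖ` and `K - g`, the set
`((Fₖ + hₖ) ∆ (F + g)) ∩ K` lies in `((Fₖ ∆ F) ∩ K') + hₖ` together with
`((F ∩ K') + hₖ) ∆ ((F ∩ K') + g)`, which is small by continuity of translation in measure.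
-/

open MeasureTheory Filter

open Set Topology
open scoped symmDiff Pointwise

def TendstoL1Loc {X ι : Type*} [TopologicalSpace X] [MeasurableSpace X] (μ : Measure X)
    (s : ι → Set X) (l : Filter ι) (S : Set X) : Prop :=
  ∀ K, IsCompact K → Tendsto (fun i => μ ((s i ∆ S) ∩ K)) l (𝓝 0)

theorem inter_inter_subset_union_symmDiff {X : Type*} (s t S T K : Set X) :
    S ∩ T ∩ K ⊆ s ∩ t ∪ (s ∆ S) ∩ K ∪ (t ∆ T) ∩ K := by
  rintro x ⟨⟨hS, hT⟩, hK⟩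
  by_cases hs : x ∈ s <;> by_cases ht : x ∈ t <;> simp_all [mem_symmDiff]

theorem TendstoL1Loc.measure_inter_eq_zero {X ι : Type*} [TopologicalSpace X]
    [SigmaCompactSpace X] [MeasurableSpace X] {l : Filter ι} [l.NeBot] {μ : Measure X}
    {s t : ι → Set X} {S T : Set X} (hs : TendstoL1Loc μ s l S) (ht : TendstoL1Loc μ t l T)
    (hst : ∀ᶠ i in l, μ (s i ∩ t i) = 0) : μ (S ∩ T) = 0 := by
  suffices hK : ∀ K, IsCompact K → μ (S ∩ T ∩ K) = 0 by
    refine measure_mono_null (fun x hx => ?_) (measure_iUnion_null fun n =>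
      hK _ (isCompact_compactCovering X n))
    obtain ⟨n, hn⟩ := mem_iUnion.mp (iUnion_compactCovering X ▸ mem_univ x)
    exact mem_iUnion.mpr ⟨n, hx, hn⟩
  intro K hK
  have hbound : ∀ᶠ i in l, μ (S ∩ T ∩ K) ≤ μ ((s i ∆ S) ∩ K) + μ ((t i ∆ T) ∩ K) := by
    filter_upwards [hst] with i hi
    calc μ (S ∩ T ∩ K) ≤ μ (s i ∩ t i) + μ ((s i ∆ S) ∩ K) + μ ((t i ∆ T) ∩ K) :=
          (measure_mono (inter_inter_subset_union_symmDiff _ _ _ _ _)).trans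
            ((measure_union_le _ _).trans (by gcongr; exact measure_union_le _ _))
      _ = _ := by rw [hi, zero_add]
  simpa using ge_of_tendsto ((hs K hK).add (ht K hK)) hbound

section TopologicalAddGroup

variable {G ι : Type*} [AddGroup G] [TopologicalSpace G] [IsTopologicalAddGroup G]
  [MeasurableSpace G] [BorelSpace G] {μ : Measure G} [μ.IsAddRightInvariant]
  {l : Filter ι} {h : ι → G} {g : G}

theorem measure_preimage_sub_right (c : G) (A : Set G) :
    μ ((· - c) ⁻¹' A) = μ A :=
  (measurePreserving_sub_right μ c).measure_preimage_equiv (f := MeasurableEquiv.subRight c) A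

theorem tendsto_measure_preimage_sub_symmDiff [μ.InnerRegularCompactLTTop]
    [IsLocallyFiniteMeasure μ] (hh : Tendsto h l (𝓝 g)) {A : Set G}
    (hA : NullMeasurableSet A μ) (hμA : μ A ≠ ⊤) :
    Tendsto (fun i => μ (((· - h i) ⁻¹' A) ∆ ((· - g) ⁻¹' A))) l (𝓝 0) := by
  let subRight : G → C(G, G) := fun c => ⟨(· - c), continuous_sub_right c⟩
  have hcont : Continuous subRight :=
    ContinuousMap.continuous_of_continuous_uncurry _ (continuous_snd.sub continuous_fst)
  exact tendsto_measure_symmDiff_preimage_nhds_zero (f := subRight ∘ h) (g := subRight g)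
    (hcont.continuousAt.tendsto.comp hh)
    (Eventually.of_forall fun i => measurePreserving_sub_right μ (h i))
    (measurePreserving_sub_right μ g) hA hμA

theorem TendstoL1Loc.preimage_sub [LocallyCompactSpace G] [μ.InnerRegularCompactLTTop]
    [IsFiniteMeasureOnCompacts μ] {s : ι → Set G} {S : Set G} (hs : TendstoL1Loc μ s l S)
    (hS : NullMeasurableSet S μ) (hh : Tendsto h l (𝓝 g)) :
    TendstoL1Loc μ (fun i => (· - h i) ⁻¹' s i) l ((· - g) ⁻¹' S) := by
  intro K hK
  obtain ⟨L, hL, hgL⟩ := exists_compact_mem_nhds g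
  set K' := closure (K - L)
  have hK' : IsCompact K' := by
    refine IsCompact.closure ?_
    simpa only [← image2_sub, ← image_prod] using (hK.prod hL).image continuous_sub
  have hbound : ∀ᶠ i in l, μ ((((· - h i) ⁻¹' s i) ∆ ((· - g) ⁻¹' S)) ∩ K) ≤
      μ ((s i ∆ S) ∩ K') + μ (((· - h i) ⁻¹' (S ∩ K')) ∆ ((· - g) ⁻¹' (S ∩ K'))) := by
    filter_upwards [hh hgL] with i hi
    rw [← measure_preimage_sub_right (μ := μ) (h i) ((s i ∆ S) ∩ K')]
    refine (measure_mono ?_).trans (measure_union_le _ _)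
    rintro x ⟨hx, hxK⟩
    have hxi : x - h i ∈ K' := subset_closure (sub_mem_sub hxK hi)
    have hxg : x - g ∈ K' := subset_closure (sub_mem_sub hxK (mem_of_mem_nhds hgL))
    simp only [mem_symmDiff, mem_preimage, mem_union, mem_inter_iff] at hx ⊢
    tauto
  have hlim : Tendsto (fun i => μ ((s i ∆ S) ∩ K') +
      μ (((· - h i) ⁻¹' (S ∩ K')) ∆ ((· - g) ⁻¹' (S ∩ K')))) l (𝓝 0) := by
    simpa using (hs _ hK').add (tendsto_measure_preimage_sub_symmDiff hh
      (hS.inter isClosed_closure.measurableSet.nullMeasurableSet)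
      (measure_inter_lt_top_of_right_ne_top hK'.measure_lt_top.ne).ne)
  exact tendsto_of_tendsto_of_tendsto_of_le_of_le' tendsto_const_nhds hlim
    (Eventually.of_forall fun _ => zero_le) hbound

end TopologicalAddGroup

theorem essential_disjointness_passes_to_limit_general (n : ℕ)
    (Ek Fk : ℕ → Set (EuclideanSpace ℝ (Fin n)))
    (E F : Set (EuclideanSpace ℝ (Fin n)))
    (hFm : MeasurableSet F)
    (hEconv : ∀ K : Set (EuclideanSpace ℝ (Fin n)), IsCompact K →
      Tendsto (fun k => volume ((symmDiff (Ek k) E) ∩ K)) atTop (nhds 0))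
    (hFconv : ∀ K : Set (EuclideanSpace ℝ (Fin n)), IsCompact K →
      Tendsto (fun k => volume ((symmDiff (Fk k) F) ∩ K)) atTop (nhds 0))
    (hk : ℕ → EuclideanSpace ℝ (Fin n))
    (g : EuclideanSpace ℝ (Fin n))
    (hkconv : Tendsto hk atTop (nhds g))
    (hzero : ∀ k, volume (Ek k ∩ {x | x - hk k ∈ Fk k}) = 0) :
    volume (E ∩ {x | x - g ∈ F}) = 0 := by
  have hFtrans : TendstoL1Loc volume (fun k => (· - hk k) ⁻¹' Fk k) atTop ((· - g) ⁻¹' F) :=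
    TendstoL1Loc.preimage_sub hFconv hFm.nullMeasurableSet hkconv
  exact TendstoL1Loc.measure_inter_eq_zero hEconv hFtrans (Eventually.of_forall hzero)

/-- Essential disjointness of translated sets passes to the limit under Kuratowski
convergence of lattices and L¹_loc convergence of sets. -/
theorem essential_disjointness_passes_to_limit (n : ℕ)
    (Gk : ℕ → AddSubgroup (EuclideanSpace ℝ (Fin n)))
    (G : AddSubgroup (EuclideanSpace ℝ (Fin n)))
    (hGk : ∀ k, IsEuclideanLattice (Gk k)) (hG : IsEuclideanLattice G)
    (hKur : (G : Set (EuclideanSpace ℝ (Fin n))) =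
      {x | Tendsto (fun k => Metric.infDist x (Gk k : Set (EuclideanSpace ℝ (Fin n))))
        atTop (nhds 0)})
    (Ek Fk : ℕ → Set (EuclideanSpace ℝ (Fin n)))
    (E F : Set (EuclideanSpace ℝ (Fin n)))
    (hEkm : ∀ k, MeasurableSet (Ek k)) (hFkm : ∀ k, MeasurableSet (Fk k))
    (hEm : MeasurableSet E) (hFm : MeasurableSet F)
    (hEconv : ∀ K : Set (EuclideanSpace ℝ (Fin n)), IsCompact K →
      Tendsto (fun k => volume ((symmDiff (Ek k) E) ∩ K)) atTop (nhds 0))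
    (hFconv : ∀ K : Set (EuclideanSpace ℝ (Fin n)), IsCompact K →
      Tendsto (fun k => volume ((symmDiff (Fk k) F) ∩ K)) atTop (nhds 0))
    (hk : ℕ → EuclideanSpace ℝ (Fin n)) (hkmem : ∀ k, hk k ∈ Gk k)
    (g : EuclideanSpace ℝ (Fin n)) (hgG : g ∈ G)
    (hkconv : Tendsto hk atTop (nhds g))
    (hzero : ∀ k, volume (Ek k ∩ {x | x - hk k ∈ Fk k}) = 0) :
    volume (E ∩ {x | x - g ∈ F}) = 0 :=
  essential_disjointness_passes_to_limit_general n Ek Fk E F hFm hEconv hFconv hk g hkconv hzero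
end
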